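/- arXiv:1702.06370 — 4 statements merged into one kernel-verified Lean document; each statement's English description precedes it below -/
import Mathlib

section
/- If a hypergraph H on a finite vertex set is connected (any two vertices joined by a path of hyperedges) and for every pair of vertices x, y the sets E(x), E(y) of hyperedges containing them satisfy E(x) ⊆ E(y) or E(y) ⊆ E(x) or E(x) ∩ E(y) = ∅, then any two hyperedges of H have nonempty intersection. -/
/-!
If a hyperedge `g` meets `e` in a vertex `x'` and shares a vertex `b` with another hyperedge `h`,
then `E(b)` and `E(x')` both contain `g`, so they are comparable: either `x' ∈ h`, or `b ∈ e`.
In both cases `h` meets `e`. Following a path from a vertex of `e₁` to a vertex of `e₂`, the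
property of lying in a hyperedge that meets `e₁` is thus propagated to the end of the path, and
one more step shows that `e₂` itself meets `e₁`.
-/

/-- The set of hyperedges of `H` that contain the vertex `x`. -/
def edgesOf {V : Type*} (H : Set (Set V)) (x : V) : Set (Set V) :=
  {e ∈ H | x ∈ e}

/-- Two vertices are adjacent in the hypergraph `H` if some hyperedge contains both. -/
def hgAdj {V : Type*} (H : Set (Set V)) (x y : V) : Prop :=
  ∃ e ∈ H, x ∈ e ∧ y ∈ e

section Hierarchy

variable {V : Type*} {H : Set (Set V)}

theorem edgesOf_subset_or_subset_of_mem {a b : V}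
    (hab : edgesOf H a ⊆ edgesOf H b ∨ edgesOf H b ⊆ edgesOf H a ∨
      edgesOf H a ∩ edgesOf H b = ∅)
    {g : Set V} (hg : g ∈ H) (ha : a ∈ g) (hb : b ∈ g) :
    edgesOf H a ⊆ edgesOf H b ∨ edgesOf H b ⊆ edgesOf H a := by
  rcases hab with h | h | h
  · exact Or.inl h
  · exact Or.inr h
  · have hg' : g ∈ edgesOf H a ∩ edgesOf H b := ⟨⟨hg, ha⟩, ⟨hg, hb⟩⟩
    simp [h] at hg'

theorem inter_nonempty_of_inter_nonempty (hhier : ∀ x y : V,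
      edgesOf H x ⊆ edgesOf H y ∨ edgesOf H y ⊆ edgesOf H x ∨ edgesOf H x ∩ edgesOf H y = ∅)
    {e g h : Set V} (he : e ∈ H) (hg : g ∈ H) (hh : h ∈ H)
    (hgh : (g ∩ h).Nonempty) (hge : (g ∩ e).Nonempty) : (h ∩ e).Nonempty := by
  obtain ⟨b, hbg, hbh⟩ := hgh
  obtain ⟨x, hxg, hxe⟩ := hge
  rcases edgesOf_subset_or_subset_of_mem (hhier b x) hg hbg hxg with hsub | hsub
  · exact ⟨x, (hsub ⟨hh, hbh⟩).2, hxe⟩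
  · exact ⟨b, hbh, (hsub ⟨he, hxe⟩).2⟩

theorem exists_inter_nonempty_of_reflTransGen (hhier : ∀ x y : V,
      edgesOf H x ⊆ edgesOf H y ∨ edgesOf H y ⊆ edgesOf H x ∨ edgesOf H x ∩ edgesOf H y = ∅)
    {e : Set V} (he : e ∈ H) {x z : V} (hx : x ∈ e)
    (hxz : Relation.ReflTransGen (hgAdj H) x z) : ∃ g ∈ H, z ∈ g ∧ (g ∩ e).Nonempty := by
  induction hxz with
  | refl => exact ⟨e, he, hx, x, hx, hx⟩
  | tail _ hbc ih =>
    obtain ⟨g, hg, hbg, hge⟩ := ih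
    obtain ⟨h, hh, hbh, hch⟩ := hbc
    exact ⟨h, hh, hch, inter_nonempty_of_inter_nonempty hhier he hg hh ⟨_, hbg, hbh⟩ hge⟩

end Hierarchy

theorem stmt_0_general {V : Type*} (H : Set (Set V))
    (hedge_ne : ∀ e ∈ H, e.Nonempty)
    (hconn : ∀ x y : V, Relation.ReflTransGen (hgAdj H) x y)
    (hhier : ∀ x y : V,
      edgesOf H x ⊆ edgesOf H y ∨ edgesOf H y ⊆ edgesOf H x ∨
        edgesOf H x ∩ edgesOf H y = ∅) :
    ∀ e₁ ∈ H, ∀ e₂ ∈ H, (e₁ ∩ e₂).Nonempty := by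
  intro e₁ he₁ e₂ he₂
  obtain ⟨x, hx⟩ := hedge_ne e₁ he₁
  obtain ⟨y, hy⟩ := hedge_ne e₂ he₂
  obtain ⟨g, hg, hyg, hge₁⟩ := exists_inter_nonempty_of_reflTransGen hhier he₁ hx (hconn x y)
  rw [Set.inter_comm]
  exact inter_nonempty_of_inter_nonempty hhier he₁ hg he₂ ⟨y, hyg, hy⟩ hge₁

theorem stmt_0 {V : Type*} [Finite V] (H : Set (Set V)) (hfin : H.Finite)
    (hedge_ne : ∀ e ∈ H, e.Nonempty)
    (hconn : ∀ x y : V, Relation.ReflTransGen (hgAdj H) x y)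
    (hhier : ∀ x y : V,
      edgesOf H x ⊆ edgesOf H y ∨ edgesOf H y ⊆ edgesOf H x ∨
        edgesOf H x ∩ edgesOf H y = ∅) :
    ∀ e₁ ∈ H, ∀ e₂ ∈ H, (e₁ ∩ e₂).Nonempty :=
  stmt_0_general H hedge_ne hconn hhier
end

section
/- If a hypergraph H on a finite vertex set is connected, has at least one hyperedge, and for every pair of vertices x, y the sets E(x), E(y) of hyperedges containing them satisfy E(x) ⊆ E(y) or E(y) ⊆ E(x) or E(x) ∩ E(y) = ∅, then there exists a vertex that is contained in every hyperedge of H. -/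
/-!
Pick a vertex `v` whose set of hyperedges `E(v)` is maximal. Walking along a path from `v`, each
new vertex `y` shares a hyperedge with the previous one, hence (inductively) with `v`; so `E(y)`
meets `E(v)`, and by the hierarchy condition and maximality `E(y) ⊆ E(v)`. By connectivity every
hyperedge, being nonempty, lies in `E(v)`, i.e. contains `v`.
-/

theorem exists_maximal_edgesOf {V : Type*} [Finite V] [Nonempty V] (H : Set (Set V)) :
    ∃ v : V, ∀ y, edgesOf H v ⊆ edgesOf H y → edgesOf H y ⊆ edgesOf H v := by
  obtain ⟨v, hv⟩ := Finite.exists_max fun x : V => (edgesOf H x).ncard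
  exact ⟨v, fun y hvy => (Set.eq_of_subset_of_ncard_le hvy (hv y)).ge⟩

theorem edgesOf_subset_of_reflTransGen {V : Type*} {H : Set (Set V)} {v y : V}
    (hhier : ∀ x : V, edgesOf H x ⊆ edgesOf H v ∨ edgesOf H v ⊆ edgesOf H x ∨
      edgesOf H x ∩ edgesOf H v = ∅)
    (hmax : ∀ x, edgesOf H v ⊆ edgesOf H x → edgesOf H x ⊆ edgesOf H v)
    (hpath : Relation.ReflTransGen (hgAdj H) v y) :
    edgesOf H y ⊆ edgesOf H v := by
  induction hpath with
  | refl => exact subset_rfl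
  | @tail b c _ hbc ih =>
    obtain ⟨e, heH, hbe, hce⟩ := hbc
    have hshared : e ∈ edgesOf H c ∩ edgesOf H v := ⟨⟨heH, hce⟩, ih ⟨heH, hbe⟩⟩
    rcases hhier c with hcv | hvc | hdisj
    · exact hcv
    · exact hmax c hvc
    · simp [hdisj] at hshared

theorem stmt_1_general {V : Type*} [Finite V] (H : Set (Set V))
    (hne : H.Nonempty)
    (hedge_ne : ∀ e ∈ H, e.Nonempty)
    (hconn : ∀ x y : V, Relation.ReflTransGen (hgAdj H) x y)
    (hhier : ∀ x y : V,
      edgesOf H x ⊆ edgesOf H y ∨ edgesOf H y ⊆ edgesOf H x ∨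
        edgesOf H x ∩ edgesOf H y = ∅) :
    ∃ v : V, ∀ e ∈ H, v ∈ e := by
  obtain ⟨e₀, he₀⟩ := hne
  have : Nonempty V := (hedge_ne e₀ he₀).to_subtype.map Subtype.val
  obtain ⟨v, hmax⟩ := exists_maximal_edgesOf H
  have hsub (y : V) : edgesOf H y ⊆ edgesOf H v :=
    edgesOf_subset_of_reflTransGen (hhier · v) hmax (hconn v y)
  refine ⟨v, fun e he => ?_⟩
  obtain ⟨w, hw⟩ := hedge_ne e he
  exact (hsub w ⟨he, hw⟩).2

theorem stmt_1 {V : Type*} [Finite V] (H : Set (Set V)) (hfin : H.Finite)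
    (hne : H.Nonempty)
    (hedge_ne : ∀ e ∈ H, e.Nonempty)
    (hconn : ∀ x y : V, Relation.ReflTransGen (hgAdj H) x y)
    (hhier : ∀ x y : V,
      edgesOf H x ⊆ edgesOf H y ∨ edgesOf H y ⊆ edgesOf H x ∨
        edgesOf H x ∩ edgesOf H y = ∅) :
    ∃ v : V, ∀ e ∈ H, v ∈ e :=
  stmt_1_general H hne hedge_ne hconn hhier
end

section
/- Every connected q-hierarchical hypergraph with a distinguished free set has a q-tree. Precisely: let H be a hypergraph on finite vertex set V with a finite set of hyperedges covering V, such that (i) for all x, y ∈ V, E(x) ⊆ E(y) or E(y) ⊆ E(x) or E(x) ∩ E(y) = ∅, and (ii) for a distinguished set F ⊆ V, if E(x) ⊊ E(y) and x ∈ F then y ∈ F; and suppose H is connected. Then there exists a rooted directed tree T on V such that every hyperedge of H equals path[v] for some vertex v (the set of vertices on the path from the root to v), and if F is nonempty then F is a connected subset of T containing the root. -/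
/-- A rooted directed tree on vertex set `V`, given by a root, a parent function
(the root is its own parent) and a depth function that decreases along parents. -/
structure DirRootedTree (V : Type*) where
  root : V
  parent : V → V
  depth : V → ℕ
  parent_root : parent root = root
  depth_root : depth root = 0
  depth_parent : ∀ v, v ≠ root → depth (parent v) + 1 = depth v

/-- The set of vertices on the path from the root to `v` (inclusive). -/
def DirRootedTree.pathSet {V : Type*} (T : DirRootedTree V) (v : V) : Set V :=
  {u | ∃ n : ℕ, T.parent^[n] v = u}

/-!
Order the vertices by reverse inclusion of their edge sets `E(x)`, breaking ties between equal
edge sets by a linear order that puts `F` first. By the hierarchy condition the vertices of an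
edge, and the predecessors of any vertex, form chains, so each edge is the down-set of its largest
vertex and the order is a tree order whose parent map sends a vertex to its immediate
predecessor. Connectivity makes some `E(m)` contain all others, which yields a least vertex, the
root; the condition on `F` together with the tie-break makes `F` a down-set.
-/

open Set Function OrderDual

theorem IsChain.exists_isGreatest {α : Type*} [Preorder α] {s : Set α}
    (hs : IsChain (· ≤ ·) s) (hfin : s.Finite) (hne : s.Nonempty) : ∃ a, IsGreatest s a := by
  obtain ⟨a, ha⟩ := hfin.exists_maximal hne
  exact ⟨a, ha.prop, fun b hb => (hs.total hb ha.prop).elim id (ha.2 hb)⟩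

namespace DirRootedTree

variable {V : Type*} [PartialOrder V]

theorem pathSet_eq_Iic [WellFoundedLT V] (T : DirRootedTree V) (hroot : IsMin T.root)
    (hparent : ∀ v, v ≠ T.root → Iic (T.parent v) = Iio v) (v : V) :
    T.pathSet v = Iic v := by
  have parent_lt : ∀ v, v ≠ T.root → T.parent v < v := fun v hv =>
    mem_Iio.1 (hparent v hv ▸ self_mem_Iic)
  have parent_le : ∀ v, T.parent v ≤ v := fun v => by
    by_cases hv : v = T.root
    · rw [hv, T.parent_root]
    · exact (parent_lt v hv).le
  ext u
  constructor
  · rintro ⟨n, rfl⟩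
    induction n generalizing v with
    | zero => exact le_rfl
    | succ n ih => rw [iterate_succ_apply]; exact (ih _).trans (parent_le v)
  · intro hu
    induction v using WellFoundedLT.induction with
    | _ v ih =>
    obtain rfl | hlt := hu.eq_or_lt
    · exact ⟨0, rfl⟩
    have hv : v ≠ T.root := fun h => hroot.not_lt (h ▸ hlt)
    have hup : u ≤ T.parent v := by rw [← mem_Iic, hparent v hv]; exact hlt
    obtain ⟨n, hn⟩ := ih _ (parent_lt v hv) hup
    exact ⟨n + 1, by rwa [iterate_succ_apply]⟩

theorem exists_pathSet_eq_Iic [Finite V] (r : V) (hr : ∀ v, r ≤ v)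
    (hchain : ∀ v : V, IsChain (· ≤ ·) (Iic v)) :
    ∃ T : DirRootedTree V, T.root = r ∧ ∀ v, T.pathSet v = Iic v := by
  classical
  have hpred : ∀ v, v ≠ r → ∃ p, IsGreatest (Iio v) p := fun v hv =>
    ((hchain v).mono Iio_subset_Iic_self).exists_isGreatest (toFinite _)
      ⟨r, (hr v).lt_of_ne (Ne.symm hv)⟩
  choose! pred hpred using hpred
  have hIic : ∀ v, v ≠ r → Iic (pred v) = Iio v := fun v hv =>
    (Iic_subset_Iio.2 (hpred v hv).1).antisymm (hpred v hv).2
  have hmin : IsMin r := fun v _ => hr v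
  let T : DirRootedTree V :=
    { root := r
      parent := fun v => if v = r then r else pred v
      depth := fun v => (Iio v).ncard
      parent_root := if_pos rfl
      depth_root := by simp [Iio_eq_empty_iff.2 hmin]
      depth_parent := fun v hv => by
        simp only [if_neg hv]
        rw [← hIic v hv, ← Iio_insert, ncard_insert_of_notMem self_notMem_Iio (toFinite _)] }
  refine ⟨T, rfl, T.pathSet_eq_Iic hmin fun v hv => ?_⟩
  simp only [T, if_neg hv, hIic v hv]

end DirRootedTree

section Hypergraph

variable {V : Type*} {H : Set (Set V)}

def IsHierarchical (H : Set (Set V)) : Prop :=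
  ∀ x y : V, edgesOf H x ⊆ edgesOf H y ∨ edgesOf H y ⊆ edgesOf H x ∨
    edgesOf H x ∩ edgesOf H y = ∅

theorem IsHierarchical.subset_or_subset {x y : V} (hH : IsHierarchical H) {e : Set V}
    (he : e ∈ H) (hx : x ∈ e) (hy : y ∈ e) :
    edgesOf H x ⊆ edgesOf H y ∨ edgesOf H y ⊆ edgesOf H x :=
  have hxy : (edgesOf H x ∩ edgesOf H y).Nonempty := ⟨e, ⟨he, hx⟩, he, hy⟩
  (hH x y).imp_right fun h => h.resolve_right hxy.ne_empty

theorem IsHierarchical.exists_forall_edgesOf_subset [Finite V] [Nonempty V]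
    (hH : IsHierarchical H) (hconn : ∀ x y : V, Relation.ReflTransGen (hgAdj H) x y) :
    ∃ m, ∀ v, edgesOf H v ⊆ edgesOf H m := by
  obtain ⟨m, -, hm⟩ := finite_univ.exists_maximalFor (edgesOf H) univ univ_nonempty
  refine ⟨m, fun v => ?_⟩
  induction hconn m v with
  | refl => exact subset_rfl
  | tail _ hbc ih =>
    obtain ⟨e, he, hb, hc⟩ := hbc
    rcases hH.subset_or_subset he (ih ⟨he, hb⟩).2 hc with h | h
    · exact hm (mem_univ _) h
    · exact h

/-- `u ≤ w` is to mean that `u` is an ancestor of `w` in the tree to be built. -/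
structure IsAncestorOrder [PartialOrder V] (H : Set (Set V)) : Prop where
  antitone_edgesOf : Antitone (edgesOf H)
  le_or_le_of_subset : ∀ ⦃u w : V⦄, edgesOf H u ⊆ edgesOf H w → u ≤ w ∨ w ≤ u

namespace IsAncestorOrder

variable [PartialOrder V] (hord : IsAncestorOrder H) (hH : IsHierarchical H)
include hord hH

theorem isChain_of_mem {e : Set V} (he : e ∈ H) : IsChain (· ≤ ·) e := fun _ hu _ hw _ =>
  (hH.subset_or_subset he hu hw).elim (fun h => hord.le_or_le_of_subset h)
    fun h => (hord.le_or_le_of_subset h).symm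

theorem isChain_Iic (hcover : ∀ v : V, ∃ e ∈ H, v ∈ e) (v : V) :
    IsChain (· ≤ ·) (Iic v) := by
  obtain ⟨e, he, hv⟩ := hcover v
  exact (hord.isChain_of_mem hH he).mono fun u hu => (hord.antitone_edgesOf hu ⟨he, hv⟩).2

theorem exists_eq_Iic_of_mem [Finite V] {e : Set V} (he : e ∈ H) (hne : e.Nonempty) :
    ∃ v, e = Iic v := by
  obtain ⟨v, hve, hv⟩ := (hord.isChain_of_mem hH he).exists_isGreatest (toFinite e) hne
  exact ⟨v, Subset.antisymm (fun _ hu => hv hu)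
    fun _ hu => (hord.antitone_edgesOf hu ⟨he, hve⟩).2⟩

theorem exists_forall_le [Finite V] [Nonempty V]
    (hconn : ∀ x y : V, Relation.ReflTransGen (hgAdj H) x y) : ∃ r : V, ∀ v, r ≤ v := by
  obtain ⟨m, hm⟩ := hH.exists_forall_edgesOf_subset hconn
  obtain ⟨r, -, hr⟩ := Finite.exists_minimal (s := (univ : Set V)) finite_univ univ_nonempty
  have le_of_comparable : ∀ v, r ≤ v ∨ v ≤ r → r ≤ v := fun v h =>
    h.elim id (hr (mem_univ v))
  have hrm : r ≤ m := le_of_comparable m (hord.le_or_le_of_subset (hm r))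
  have hEr : ∀ v, edgesOf H v ⊆ edgesOf H r := fun v => (hm v).trans (hord.antitone_edgesOf hrm)
  exact ⟨r, fun v => le_of_comparable v (hord.le_or_le_of_subset (hEr v)).symm⟩

end IsAncestorOrder

theorem exists_isAncestorOrder_isLowerSet [Countable V] (H : Set (Set V)) (F : Set V)
    (hF : ∀ x y : V, edgesOf H x ⊂ edgesOf H y → x ∈ F → y ∈ F) :
    ∃ _ : PartialOrder V, IsAncestorOrder H ∧ IsLowerSet F := by
  classical
  obtain ⟨ι, hι⟩ := Countable.exists_injective_nat V
  let key (v : V) : (Set (Set V))ᵒᵈ ×ₗ (Bool ×ₗ ℕ) :=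
    toLex (toDual (edgesOf H v), toLex (decide (v ∉ F), ι v))
  have hkey : Injective key := fun u w h => hι (congrArg (fun k => (ofLex (ofLex k).2).2) h)
  let _ : PartialOrder V := PartialOrder.lift key hkey
  refine ⟨‹_›, ⟨fun u w h => ?_, fun u w h => ?_⟩, fun v u h hv => ?_⟩
  · exact (Prod.Lex.toLex_le_toLex'.1 h).1
  · rcases h.eq_or_ssubset with heq | hlt
    · rcases le_total (ofLex (key u)).2 (ofLex (key w)).2 with h' | h'
      · exact Or.inl (Prod.Lex.toLex_le_toLex'.2 ⟨heq.ge, fun _ => h'⟩)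
      · exact Or.inr (Prod.Lex.toLex_le_toLex'.2 ⟨heq.le, fun _ => h'⟩)
    · exact Or.inr (Prod.Lex.toLex_le_toLex'.2 ⟨h, fun h' => (hlt.ne h'.symm).elim⟩)
  · obtain ⟨hsub, htie⟩ := Prod.Lex.toLex_le_toLex'.1 h
    rcases hsub.eq_or_lt with heq | hlt
    · simpa [hv, Bool.le_iff_imp] using (Prod.Lex.toLex_le_toLex'.1 (htie heq)).1
    · exact hF v u hlt hv

end Hypergraph

theorem stmt_4_general {V : Type*} [Finite V] (H : Set (Set V))
    (hne : H.Nonempty)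
    (hedge_ne : ∀ e ∈ H, e.Nonempty)
    (hcover : ∀ v : V, ∃ e ∈ H, v ∈ e)
    (hconn : ∀ x y : V, Relation.ReflTransGen (hgAdj H) x y)
    (hhier : ∀ x y : V,
      edgesOf H x ⊆ edgesOf H y ∨ edgesOf H y ⊆ edgesOf H x ∨
        edgesOf H x ∩ edgesOf H y = ∅)
    (F : Set V)
    (hF : ∀ x y : V, edgesOf H x ⊂ edgesOf H y → x ∈ F → y ∈ F) :
    ∃ T : DirRootedTree V,
      (∀ e ∈ H, ∃ v : V, e = T.pathSet v) ∧
      (F.Nonempty → T.root ∈ F ∧ ∀ v ∈ F, T.pathSet v ⊆ F) := by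
  have : Nonempty V := ⟨(hedge_ne _ hne.some_mem).some⟩
  obtain ⟨_, hord, hFlower⟩ := exists_isAncestorOrder_isLowerSet H F hF
  obtain ⟨r, hr⟩ := hord.exists_forall_le hhier hconn
  obtain ⟨T, rfl, hT⟩ :=
    DirRootedTree.exists_pathSet_eq_Iic r hr (hord.isChain_Iic hhier hcover)
  refine ⟨T, fun e he => ?_, fun ⟨x, hx⟩ => ⟨hFlower (hr x) hx, fun v hv => ?_⟩⟩
  · obtain ⟨v, rfl⟩ := hord.exists_eq_Iic_of_mem hhier he (hedge_ne e he)
    exact ⟨v, (hT v).symm⟩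
  · rw [hT]
    exact hFlower.Iic_subset hv

theorem stmt_4 {V : Type*} [Finite V] (H : Set (Set V)) (hfin : H.Finite)
    (hne : H.Nonempty)
    (hedge_ne : ∀ e ∈ H, e.Nonempty)
    (hcover : ∀ v : V, ∃ e ∈ H, v ∈ e)
    (hconn : ∀ x y : V, Relation.ReflTransGen (hgAdj H) x y)
    (hhier : ∀ x y : V,
      edgesOf H x ⊆ edgesOf H y ∨ edgesOf H y ⊆ edgesOf H x ∨
        edgesOf H x ∩ edgesOf H y = ∅)
    (F : Set V)
    (hF : ∀ x y : V, edgesOf H x ⊂ edgesOf H y → x ∈ F → y ∈ F) :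
    ∃ T : DirRootedTree V,
      (∀ e ∈ H, ∃ v : V, e = T.pathSet v) ∧
      (F.Nonempty → T.root ∈ F ∧ ∀ v ∈ F, T.pathSet v ⊆ F) :=
  stmt_4_general H hne hedge_ne hcover hconn hhier F hF
end

section
/- For the query φ(x,y) := (E x x ∧ E x y ∧ E y y) on a directed graph D: encoding a Boolean matrix M on a bipartite vertex set {a_1,...,a_n} ∪ {b_1,...,b_n} via edges (a_i, b_j) for M_{i,j} = 1, loops (a_i,a_i) for u_i = 1, and loops (b_j,b_j) for v_j = 1, the query result φ(D) contains a pair of the form (a_i, b_j) if and only if u^T M v = 1 over the Boolean semiring; moreover all pairs in φ(D) not of this form are among the at most 2n loop pairs (c,c) with (c,c) ∈ E. -/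
/-- The result of the query `φ(x,y) = E x x ∧ E x y ∧ E y y` on the graph `E`. -/
def phi1 {V : Type*} (E : Set (V × V)) : Set (V × V) :=
  {p | (p.1, p.1) ∈ E ∧ p ∈ E ∧ (p.2, p.2) ∈ E}

/-- The bipartite encoding of a Boolean matrix `M` and vectors `u`, `v`:
edges `(aᵢ, bⱼ)` for `M i j = 1`, loops on `aᵢ` for `u i = 1`, and loops on
`bⱼ` for `v j = 1`, where `aᵢ = inl i` and `bⱼ = inr j`. -/
def bipE (n : ℕ) (M : Fin n → Fin n → Bool) (u v : Fin n → Bool) :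
    Set ((Fin n ⊕ Fin n) × (Fin n ⊕ Fin n)) :=
  {p | (∃ i j, M i j = true ∧ p = (Sum.inl i, Sum.inr j)) ∨
       (∃ i, u i = true ∧ p = (Sum.inl i, Sum.inl i)) ∨
       (∃ j, v j = true ∧ p = (Sum.inr j, Sum.inr j))}

theorem mem_phi1 {V : Type*} {E : Set (V × V)} {x y : V} :
    (x, y) ∈ phi1 E ↔ (x, x) ∈ E ∧ (x, y) ∈ E ∧ (y, y) ∈ E :=
  Iff.rfl

theorem Set.ncard_sep_fst_eq_snd_le {V : Type*} [Finite V] (S : Set (V × V)) :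
    {p ∈ S | p.1 = p.2}.ncard ≤ Nat.card V := by
  have hinj : Set.InjOn Prod.fst {p ∈ S | p.1 = p.2} := by
    rintro ⟨a, b⟩ ⟨-, hab : a = b⟩ ⟨c, d⟩ ⟨-, hcd : c = d⟩ (hac : a = c)
    subst hab hcd hac
    rfl
  rw [← hinj.ncard_image]
  exact Set.ncard_le_card _

section bipE

variable {n : ℕ} {M : Fin n → Fin n → Bool} {u v : Fin n → Bool}

theorem inl_inr_mem_bipE {i j : Fin n} :
    ((Sum.inl i, Sum.inr j) : (Fin n ⊕ Fin n) × (Fin n ⊕ Fin n)) ∈ bipE n M u v ↔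
      M i j = true := by
  simp [bipE]

theorem inl_inl_mem_bipE {i : Fin n} :
    ((Sum.inl i, Sum.inl i) : (Fin n ⊕ Fin n) × (Fin n ⊕ Fin n)) ∈ bipE n M u v ↔
      u i = true := by
  simp [bipE]

theorem inr_inr_mem_bipE {j : Fin n} :
    ((Sum.inr j, Sum.inr j) : (Fin n ⊕ Fin n) × (Fin n ⊕ Fin n)) ∈ bipE n M u v ↔
      v j = true := by
  simp [bipE]

theorem fst_eq_snd_of_mem_bipE {p : (Fin n ⊕ Fin n) × (Fin n ⊕ Fin n)}
    (hp : p ∈ bipE n M u v) (hne : ∀ i j : Fin n, p ≠ (Sum.inl i, Sum.inr j)) :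
    p.1 = p.2 := by
  rcases hp with ⟨i, j, -, rfl⟩ | ⟨i, -, rfl⟩ | ⟨j, -, rfl⟩
  · exact (hne i j rfl).elim
  · rfl
  · rfl

theorem inl_inr_mem_phi1_bipE {i j : Fin n} :
    ((Sum.inl i, Sum.inr j) : (Fin n ⊕ Fin n) × (Fin n ⊕ Fin n)) ∈ phi1 (bipE n M u v) ↔
      u i = true ∧ M i j = true ∧ v j = true := by
  rw [mem_phi1, inl_inl_mem_bipE, inl_inr_mem_bipE, inr_inr_mem_bipE]

end bipE

theorem stmt_16 (n : ℕ) (M : Fin n → Fin n → Bool) (u v : Fin n → Bool) :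
    ((∃ i j : Fin n,
        ((Sum.inl i, Sum.inr j) : (Fin n ⊕ Fin n) × (Fin n ⊕ Fin n))
          ∈ phi1 (bipE n M u v))
      ↔ ∃ i j : Fin n, u i = true ∧ M i j = true ∧ v j = true) ∧
    (∀ p ∈ phi1 (bipE n M u v),
      (∀ i j : Fin n, p ≠ (Sum.inl i, Sum.inr j)) →
        p.1 = p.2 ∧ (p.1, p.1) ∈ bipE n M u v) ∧
    {p ∈ phi1 (bipE n M u v) | p.1 = p.2}.ncard ≤ 2 * n := by
  refine ⟨by simp only [inl_inr_mem_phi1_bipE], ?_, ?_⟩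
  · rintro p ⟨hloop, hp, -⟩ hne
    exact ⟨fst_eq_snd_of_mem_bipE hp hne, hloop⟩
  · calc {p ∈ phi1 (bipE n M u v) | p.1 = p.2}.ncard
        ≤ Nat.card (Fin n ⊕ Fin n) := Set.ncard_sep_fst_eq_snd_le _
      _ = 2 * n := by simp [two_mul]
end
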